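/- arXiv:2111.07941 — 2 statements merged into one kernel-verified Lean document; each statement's English description precedes it below -/
import Mathlib

section
/- Let X and Y be nonnegative real random variables on a common probability space, and let a₁, a₂, v₁, v₂ ≥ 0 be such that P[X ≥ a₁ + v₁√t] ≤ e^{−t} and P[Y ≥ a₂ + v₂√t] ≤ e^{−t} for all t ≥ 0. Then for all t ≥ 0, P[X + Y ≥ a₁ + a₂ + (v₁ + v₂)√(log 2) + (v₁ + v₂)√t] ≤ e^{−t}. -/
open MeasureTheory

/-- Tail-bound composition lemma at the core of Theorem 4: if nonnegative random
variables `X, Y` satisfy `P[X ≥ a₁ + v₁√t] ≤ e^{-t}` and `P[Y ≥ a₂ + v₂√t] ≤ e^{-t}`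
for all `t ≥ 0`, then
`P[X + Y ≥ a₁ + a₂ + (v₁+v₂)√(log 2) + (v₁+v₂)√t] ≤ e^{-t}` for all `t ≥ 0`. -/
theorem stmt_3 {Ω : Type*} [MeasurableSpace Ω] (μ : Measure Ω) [IsProbabilityMeasure μ]
    (X Y : Ω → ℝ) (hX : ∀ ω, 0 ≤ X ω) (hY : ∀ ω, 0 ≤ Y ω)
    (a₁ a₂ v₁ v₂ : ℝ) (ha₁ : 0 ≤ a₁) (ha₂ : 0 ≤ a₂) (hv₁ : 0 ≤ v₁) (hv₂ : 0 ≤ v₂)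
    (htX : ∀ t : ℝ, 0 ≤ t →
      μ {ω | a₁ + v₁ * Real.sqrt t ≤ X ω} ≤ ENNReal.ofReal (Real.exp (-t)))
    (htY : ∀ t : ℝ, 0 ≤ t →
      μ {ω | a₂ + v₂ * Real.sqrt t ≤ Y ω} ≤ ENNReal.ofReal (Real.exp (-t))) :
    ∀ t : ℝ, 0 ≤ t →
      μ {ω | a₁ + a₂ + (v₁ + v₂) * Real.sqrt (Real.log 2) + (v₁ + v₂) * Real.sqrt t
          ≤ X ω + Y ω} ≤ ENNReal.ofReal (Real.exp (-t)) := by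
  intro t ht
  have hlog2 : (0:ℝ) < Real.log 2 := Real.log_pos (by norm_num)
  set t' := t + Real.log 2 with ht'def
  have ht' : 0 ≤ t' := by positivity
  set s := Real.sqrt t' with hsdef
  -- √t' ≤ √(log 2) + √t
  have hsqrt : s ≤ Real.sqrt (Real.log 2) + Real.sqrt t := by
    show Real.sqrt t' ≤ _
    have h1 : Real.sqrt t' ^ 2 = t' := Real.sq_sqrt ht'
    nlinarith [Real.sq_sqrt ht, Real.sq_sqrt hlog2.le, Real.sqrt_nonneg t,
      Real.sqrt_nonneg (Real.log 2), Real.sqrt_nonneg t',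
      mul_nonneg (Real.sqrt_nonneg (Real.log 2)) (Real.sqrt_nonneg t)]
  -- set inclusion
  have hsub : {ω | a₁ + a₂ + (v₁ + v₂) * Real.sqrt (Real.log 2) + (v₁ + v₂) * Real.sqrt t
          ≤ X ω + Y ω} ⊆ {ω | a₁ + v₁ * s ≤ X ω} ∪ {ω | a₂ + v₂ * s ≤ Y ω} := by
    intro ω hω
    simp only [Set.mem_setOf_eq] at hω
    by_contra hcon
    rw [Set.mem_union] at hcon
    push_neg at hcon
    obtain ⟨h1, h2⟩ := hcon
    simp only [Set.mem_setOf_eq, not_le] at h1 h2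
    have hs : (v₁ + v₂) * s ≤ (v₁ + v₂) * Real.sqrt (Real.log 2) + (v₁ + v₂) * Real.sqrt t := by
      rw [← mul_add]
      exact mul_le_mul_of_nonneg_left hsqrt (by positivity)
    nlinarith
  have h1 := htX t' ht'
  have h2 := htY t' ht'
  calc μ _ ≤ μ ({ω | a₁ + v₁ * s ≤ X ω} ∪ {ω | a₂ + v₂ * s ≤ Y ω}) := measure_mono hsub
    _ ≤ μ {ω | a₁ + v₁ * s ≤ X ω} + μ {ω | a₂ + v₂ * s ≤ Y ω} := measure_union_le _ _
    _ ≤ ENNReal.ofReal (Real.exp (-t')) + ENNReal.ofReal (Real.exp (-t')) := add_le_add h1 h2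
    _ = ENNReal.ofReal (Real.exp (-t)) := by
        rw [← ENNReal.ofReal_add (Real.exp_nonneg _) (Real.exp_nonneg _)]
        congr 1
        rw [ht'def, neg_add, Real.exp_add, Real.exp_neg (Real.log 2),
          Real.exp_log (by norm_num : (0:ℝ) < 2)]
        ring
end

section
/- Let X be a random real symmetric m×m matrix and R ≥ 0 a fixed scalar such that E[X] = 0 and E[X^q] ⪯ (q/2)! · R^q · I_m for every even natural number q. Let ε be a Rademacher random variable (taking values ±1 with probability 1/2 each) independent of X. Then for every θ ∈ ℝ, E[exp(2εθX)] ⪯ exp(2θ²R²) · I_m, where exp applied to a matrix denotes the matrix exponential. -/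
/-!
Averaging over the independent sign `ε` replaces `exp (2εθX)` by
`(exp (2θX) + exp (-2θX)) / 2 = cosh (2θX)`, whose power series contains only the even powers
`X^(2k)`. These are positive semidefinite, so in every quadratic form `vᵀ (·) v` the series has
nonnegative terms and can be integrated termwise, each term being bounded by the moment
hypothesis. Since `2^k (k!)^2 ≤ (2k)!`, the `k`-th bound `(2θ)^(2k) k! R^(2k) / (2k)!` is at most
`(2θ²R²)^k / k!`, and these sum to `exp (2θ²R²)`. The halves `exp (±2θX)` need not be
integrable, so the computation runs in lower integrals of nonnegative functions.
-/

open MeasureTheory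

/-- The matrix exponential of a real square matrix, defined entrywise by its power
series `exp(A) = ∑_q A^q / q!`. -/
noncomputable def matExp {m : ℕ} (A : Matrix (Fin m) (Fin m) ℝ) :
    Matrix (Fin m) (Fin m) ℝ :=
  Matrix.of fun a b => ∑' q : ℕ, (1 / (q.factorial : ℝ)) * ((A ^ q) a b)

open NormedSpace ProbabilityTheory Matrix
open scoped ENNReal Nat

theorem Nat.two_pow_mul_factorial_sq_le_factorial_two_mul (k : ℕ) :
    2 ^ k * k ! ^ 2 ≤ (2 * k)! := by
  induction k with
  | zero => simp
  | succ k ih =>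
    rw [show 2 * (k + 1) = 2 * k + 1 + 1 by ring, Nat.factorial_succ, Nat.factorial_succ,
      Nat.factorial_succ]
    calc 2 ^ (k + 1) * ((k + 1) * k !) ^ 2 = 2 * (k + 1) ^ 2 * (2 ^ k * k ! ^ 2) := by ring
      _ ≤ (2 * k + 1 + 1) * (2 * k + 1) * (2 * k)! := Nat.mul_le_mul (by nlinarith) ih
      _ = _ := by ring

theorem pow_two_mul_div_factorial_mul_le (c R : ℝ) (k : ℕ) :
    c ^ (2 * k) / (2 * k)! * (k ! * R ^ (2 * k)) ≤ (c ^ 2 * R ^ 2 / 2) ^ k / k ! := by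
  have hfac : (2 ^ k * k ! ^ 2 : ℝ) ≤ (2 * k)! := by
    exact_mod_cast Nat.two_pow_mul_factorial_sq_le_factorial_two_mul k
  have hx : 0 ≤ (c ^ 2 * R ^ 2) ^ k := by positivity
  calc c ^ (2 * k) / (2 * k)! * (k ! * R ^ (2 * k)) = (c ^ 2 * R ^ 2) ^ k * k ! / (2 * k)! := by
        rw [pow_mul, pow_mul, mul_pow]; ring
    _ ≤ (c ^ 2 * R ^ 2) ^ k / (2 ^ k * k !) := by
        rw [div_le_div_iff₀ (by positivity) (by positivity)]
        nlinarith [mul_le_mul_of_nonneg_left hfac hx]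
    _ = (c ^ 2 * R ^ 2 / 2) ^ k / k ! := by rw [div_pow]; ring

namespace Matrix

variable {n : Type*} [Fintype n]

theorem dotProduct_mulVec_eq_sum (M : Matrix n n ℝ) (v : n → ℝ) :
    v ⬝ᵥ M *ᵥ v = ∑ a, ∑ b, v a * M a b * v b := by
  simp [dotProduct, mulVec, Finset.mul_sum, mul_assoc]

variable [DecidableEq n]

theorem dotProduct_smul_one_sub_mulVec (M : Matrix n n ℝ) (r : ℝ) (v : n → ℝ) :
    v ⬝ᵥ (r • 1 - M) *ᵥ v = r * (v ⬝ᵥ v) - v ⬝ᵥ M *ᵥ v := by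
  rw [sub_mulVec, dotProduct_sub, smul_mulVec, one_mulVec, dotProduct_smul, smul_eq_mul]

theorem PosSemidef.dotProduct_mulVec_le {M : Matrix n n ℝ} {r : ℝ} (h : (r • 1 - M).PosSemidef)
    (v : n → ℝ) : v ⬝ᵥ M *ᵥ v ≤ r * (v ⬝ᵥ v) := by
  have := h.dotProduct_mulVec_nonneg v
  rw [star_trivial, dotProduct_smul_one_sub_mulVec] at this
  linarith

theorem IsHermitian.posSemidef_smul_one_sub {M : Matrix n n ℝ} (hM : M.IsHermitian) {r : ℝ}
    (h : ∀ v, v ⬝ᵥ M *ᵥ v ≤ r * (v ⬝ᵥ v)) : (r • 1 - M).PosSemidef := by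
  refine .of_dotProduct_mulVec_nonneg ((isHermitian_one.smul (IsSelfAdjoint.all r)).sub hM)
    fun v => ?_
  rw [star_trivial, dotProduct_smul_one_sub_mulVec]
  linarith [h v]

theorem IsHermitian.posSemidef_pow_two_mul {R : Type*} [CommRing R] [PartialOrder R] [StarRing R]
    [StarOrderedRing R] {A : Matrix n n R} (hA : A.IsHermitian) (k : ℕ) :
    (A ^ (2 * k)).PosSemidef := by
  rw [pow_mul', sq]
  nth_rewrite 1 [← (hA.pow k).eq]
  exact posSemidef_conjTranspose_mul_self _

open scoped ComplexOrder in
theorem IsHermitian.posSemidef_exp {𝕜 : Type*} [RCLike 𝕜] {A : Matrix n n 𝕜}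
    (hA : A.IsHermitian) : (NormedSpace.exp A).PosSemidef := by
  have hhalf : ((2⁻¹ : ℝ) • A).IsHermitian := hA.smul (IsSelfAdjoint.all _)
  have h : NormedSpace.exp A =
      (NormedSpace.exp ((2⁻¹ : ℝ) • A))ᴴ * NormedSpace.exp ((2⁻¹ : ℝ) • A) := by
    rw [hhalf.exp.eq, ← exp_add_of_commute _ _ (Commute.refl _), ← add_smul]
    norm_num
  rw [h]
  exact posSemidef_conjTranspose_mul_self _

theorem IsHermitian.dotProduct_exp_smul_mulVec_nonneg {A : Matrix n n ℝ} (hA : A.IsHermitian)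
    (c : ℝ) (v : n → ℝ) : 0 ≤ v ⬝ᵥ NormedSpace.exp (c • A) *ᵥ v := by
  simpa using ((hA.smul (IsSelfAdjoint.all c)).posSemidef_exp).dotProduct_mulVec_nonneg v

theorem hasSum_exp (A : Matrix n n ℝ) :
    HasSum (fun q => (q !⁻¹ : ℝ) • A ^ q) (exp A) := by
  let : NormedRing (Matrix n n ℝ) := Matrix.linftyOpNormedRing
  let : NormedAlgebra ℝ (Matrix n n ℝ) := Matrix.linftyOpNormedAlgebra
  exact exp_series_hasSum_exp' A

theorem continuous_exp : Continuous (exp : Matrix n n ℝ → Matrix n n ℝ) := by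
  let : NormedRing (Matrix n n ℝ) := Matrix.linftyOpNormedRing
  let : NormedAlgebra ℝ (Matrix n n ℝ) := Matrix.linftyOpNormedAlgebra
  let : NormedAlgebra ℚ (Matrix n n ℝ) := Matrix.linftyOpNormedAlgebra
  exact exp_continuous

theorem hasSum_dotProduct_exp_mulVec (A : Matrix n n ℝ) (v : n → ℝ) :
    HasSum (fun q => (q !⁻¹ : ℝ) * (v ⬝ᵥ (A ^ q) *ᵥ v)) (v ⬝ᵥ exp A *ᵥ v) := by
  let quad : Matrix n n ℝ →+ ℝ :=
    AddMonoidHom.mk' (fun M => v ⬝ᵥ M *ᵥ v) fun M N => by rw [add_mulVec, dotProduct_add]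
  have hquad : Continuous quad :=
    continuous_const.dotProduct (continuous_id.matrix_mulVec continuous_const)
  simpa [quad, Function.comp_def, smul_mulVec, dotProduct_smul] using
    (hasSum_exp A).map quad hquad

theorem hasSum_dotProduct_exp_add_exp_neg_mulVec (A : Matrix n n ℝ) (c : ℝ) (v : n → ℝ) :
    HasSum (fun k => 2 * (c ^ (2 * k) / (2 * k)!) * (v ⬝ᵥ (A ^ (2 * k)) *ᵥ v))
      (v ⬝ᵥ exp (c • A) *ᵥ v + v ⬝ᵥ exp (-c • A) *ᵥ v) := by
  have h := (hasSum_dotProduct_exp_mulVec (c • A) v).add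
    (hasSum_dotProduct_exp_mulVec (-c • A) v)
  simp only [smul_pow, smul_mulVec, dotProduct_smul, smul_eq_mul] at h
  rw [← (mul_right_injective₀ two_ne_zero).hasSum_iff] at h
  · convert h using 2 with k
    simp only [Function.comp_apply, (even_two_mul k).neg_pow]
    ring
  · rintro q hq
    obtain ⟨k, rfl⟩ : Odd q :=
      Nat.not_even_iff_odd.mp fun ⟨k, hk⟩ => hq ⟨k, by simp only; omega⟩
    rw [(odd_two_mul_add_one k).neg_pow]
    ring

end Matrix

theorem matExp_eq_exp {m : ℕ} (A : Matrix (Fin m) (Fin m) ℝ) : matExp A = exp A := by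
  ext a b
  simpa [matExp, one_div] using (Pi.hasSum.mp (Pi.hasSum.mp (Matrix.hasSum_exp A) a) b).tsum_eq

section Probability

variable {Ω : Type*} [MeasurableSpace Ω] {μ : Measure Ω}

theorem lintegral_comp_rademacher [IsProbabilityMeasure μ] {β : Type*} [MeasurableSpace β]
    {ε : Ω → ℝ} {Y : Ω → β} (hε : Measurable ε) (hY : Measurable Y)
    (hεval : ∀ᵐ ω ∂μ, ε ω = 1 ∨ ε ω = -1) (hεhalf : μ {ω | ε ω = 1} = 1 / 2)
    (hindep : IndepFun ε Y μ) {g : ℝ → β → ℝ≥0∞} (hg : ∀ s, Measurable (g s)) :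
    ∫⁻ ω, g (ε ω) (Y ω) ∂μ = 2⁻¹ * (∫⁻ ω, g 1 (Y ω) ∂μ + ∫⁻ ω, g (-1) (Y ω) ∂μ) := by
  have hsplit : (fun ω => g (ε ω) (Y ω)) =ᵐ[μ] fun ω => ({1} : Set ℝ).indicator 1 (ε ω) *
      g 1 (Y ω) + ({1}ᶜ : Set ℝ).indicator 1 (ε ω) * g (-1) (Y ω) := by
    filter_upwards [hεval] with ω hω
    rcases hω with h | h <;> norm_num [h, Set.indicator_apply]
  have hfactor : ∀ S : Set ℝ, MeasurableSet S → ∀ s,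
      ∫⁻ ω, S.indicator 1 (ε ω) * g s (Y ω) ∂μ = μ (ε ⁻¹' S) * ∫⁻ ω, g s (Y ω) ∂μ := by
    intro S hS s
    have hind : Measurable (S.indicator (1 : ℝ → ℝ≥0∞)) := measurable_one.indicator hS
    refine (lintegral_mul_eq_lintegral_mul_lintegral_of_indepFun'' (hind.comp hε).aemeasurable
      ((hg s).comp hY).aemeasurable (hindep.comp hind (hg s))).trans ?_
    rw [← lintegral_indicator_one (hε hS)]
    rfl
  have hone : μ (ε ⁻¹' {1}) = 2⁻¹ := by rw [← one_div, ← hεhalf]; rfl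
  have hcompl : μ (ε ⁻¹' {1}ᶜ) = 2⁻¹ := by
    rw [Set.preimage_compl, prob_compl_eq_one_sub (hε (measurableSet_singleton 1)), hone,
      ENNReal.one_sub_inv_two]
  have hmeas : Measurable fun ω => ({1} : Set ℝ).indicator (1 : ℝ → ℝ≥0∞) (ε ω) * g 1 (Y ω) :=
    ((measurable_one.indicator (measurableSet_singleton 1)).comp hε).mul ((hg 1).comp hY)
  rw [lintegral_congr_ae hsplit, lintegral_add_left hmeas, hfactor _ (measurableSet_singleton 1),
    hfactor _ (measurableSet_singleton 1).compl, hone, hcompl, mul_add]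

theorem lintegral_ofReal_tsum_le {f : ℕ → Ω → ℝ} {b : ℕ → ℝ} (hf : ∀ k ω, 0 ≤ f k ω)
    (hfs : ∀ ω, Summable fun k => f k ω) (hfi : ∀ k, Integrable (f k) μ)
    (hle : ∀ k, ∫ ω, f k ω ∂μ ≤ b k) (hb : Summable b) :
    ∫⁻ ω, ENNReal.ofReal (∑' k, f k ω) ∂μ ≤ ENNReal.ofReal (∑' k, b k) := by
  have hb0 : ∀ k, 0 ≤ b k := fun k => (integral_nonneg (hf k)).trans (hle k)
  calc ∫⁻ ω, ENNReal.ofReal (∑' k, f k ω) ∂μ = ∫⁻ ω, ∑' k, ENNReal.ofReal (f k ω) ∂μ :=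
        lintegral_congr fun ω => ENNReal.ofReal_tsum_of_nonneg (hf · ω) (hfs ω)
    _ = ∑' k, ∫⁻ ω, ENNReal.ofReal (f k ω) ∂μ :=
        lintegral_tsum fun k => (hfi k).aemeasurable.ennreal_ofReal
    _ = ∑' k, ENNReal.ofReal (∫ ω, f k ω ∂μ) := by
        congr with k
        exact (ofReal_integral_eq_lintegral_ofReal (hfi k) (.of_forall (hf k))).symm
    _ ≤ ∑' k, ENNReal.ofReal (b k) :=
        ENNReal.tsum_le_tsum fun k => ENNReal.ofReal_le_ofReal (hle k)
    _ = ENNReal.ofReal (∑' k, b k) := (ENNReal.ofReal_tsum_of_nonneg hb0 hb).symm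

variable {n : Type*} [Fintype n]

theorem integrable_dotProduct_mulVec {Y : Ω → Matrix n n ℝ}
    (hY : ∀ a b, Integrable (fun ω => Y ω a b) μ) (v : n → ℝ) :
    Integrable (fun ω => v ⬝ᵥ Y ω *ᵥ v) μ := by
  simp only [dotProduct_mulVec_eq_sum]
  exact integrable_finsetSum _ fun a _ => integrable_finsetSum _ fun b _ =>
    ((hY a b).const_mul (v a)).mul_const (v b)

theorem dotProduct_integral_mulVec {Y : Ω → Matrix n n ℝ}
    (hY : ∀ a b, Integrable (fun ω => Y ω a b) μ) (v : n → ℝ) :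
    v ⬝ᵥ (of fun a b => ∫ ω, Y ω a b ∂μ) *ᵥ v = ∫ ω, v ⬝ᵥ Y ω *ᵥ v ∂μ := by
  simp only [dotProduct_mulVec_eq_sum, of_apply]
  rw [integral_finsetSum _ fun a _ => integrable_finsetSum _ fun b _ =>
    ((hY a b).const_mul (v a)).mul_const (v b)]
  refine Finset.sum_congr rfl fun a _ => ?_
  rw [integral_finsetSum _ fun b _ => ((hY a b).const_mul (v a)).mul_const (v b)]
  simp only [integral_mul_const, integral_const_mul]

variable [DecidableEq n]

theorem measurable_ofReal_dotProduct_exp_smul_curry_mulVec (c : ℝ) (v : n → ℝ) :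
    Measurable fun Y : n × n → ℝ =>
      ENNReal.ofReal (v ⬝ᵥ exp (c • of (Function.curry Y)) *ᵥ v) := by
  have hcurry : Continuous fun Y : n × n → ℝ => of (Function.curry Y) :=
    continuous_pi fun a => continuous_pi fun b => continuous_apply (a, b)
  refine ENNReal.measurable_ofReal.comp (Continuous.measurable ?_)
  exact continuous_const.dotProduct
    ((continuous_exp.comp (hcurry.const_smul c)).matrix_mulVec continuous_const)

theorem lintegral_ofReal_dotProduct_exp_rademacher_smul_mulVec [IsProbabilityMeasure μ]
    {X : Ω → Matrix n n ℝ} (hXsym : ∀ ω, (X ω).IsHermitian)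
    (hXmeas : ∀ a b, Measurable fun ω => X ω a b) {ε : Ω → ℝ} (hε : Measurable ε)
    (hεval : ∀ᵐ ω ∂μ, ε ω = 1 ∨ ε ω = -1) (hεhalf : μ {ω | ε ω = 1} = 1 / 2)
    (hindep : IndepFun ε (fun ω (p : n × n) => X ω p.1 p.2) μ) (c : ℝ) (v : n → ℝ) :
    ∫⁻ ω, ENNReal.ofReal (v ⬝ᵥ exp ((ε ω * c) • X ω) *ᵥ v) ∂μ =
      2⁻¹ * ∫⁻ ω, ENNReal.ofReal (v ⬝ᵥ exp (c • X ω) *ᵥ v + v ⬝ᵥ exp (-c • X ω) *ᵥ v) ∂μ := by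
  have hXmeas' : Measurable fun ω (p : n × n) => X ω p.1 p.2 :=
    measurable_pi_lambda _ fun p => hXmeas p.1 p.2
  have hg : ∀ s, Measurable fun Y : n × n → ℝ =>
      ENNReal.ofReal (v ⬝ᵥ exp ((s * c) • of (Function.curry Y)) *ᵥ v) := fun s =>
    measurable_ofReal_dotProduct_exp_smul_curry_mulVec (s * c) v
  have hof : ∀ ω, of (Function.curry fun p : n × n => X ω p.1 p.2) = X ω := fun ω => rfl
  have hpos : Measurable fun ω => ENNReal.ofReal (v ⬝ᵥ exp (c • X ω) *ᵥ v) := by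
    simpa only [Function.comp_def, hof] using
      (measurable_ofReal_dotProduct_exp_smul_curry_mulVec c v).comp hXmeas'
  have h := lintegral_comp_rademacher hε hXmeas' hεval hεhalf hindep hg
  simp only [one_mul, neg_one_mul, hof] at h
  rw [h, ← lintegral_add_left hpos]
  congr with ω
  rw [ENNReal.ofReal_add ((hXsym ω).dotProduct_exp_smul_mulVec_nonneg c v)
    ((hXsym ω).dotProduct_exp_smul_mulVec_nonneg (-c) v)]

theorem lintegral_ofReal_dotProduct_exp_add_exp_neg_le {X : Ω → Matrix n n ℝ} {R : ℝ}
    (hXsym : ∀ ω, (X ω).IsHermitian)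
    (hXint : ∀ k a b, Integrable (fun ω => (X ω ^ (2 * k)) a b) μ) (v : n → ℝ)
    (hmom : ∀ k : ℕ, ∫ ω, v ⬝ᵥ X ω ^ (2 * k) *ᵥ v ∂μ ≤ k ! * R ^ (2 * k) * (v ⬝ᵥ v)) (c : ℝ) :
    ∫⁻ ω, ENNReal.ofReal (v ⬝ᵥ exp (c • X ω) *ᵥ v + v ⬝ᵥ exp (-c • X ω) *ᵥ v) ∂μ ≤
      ENNReal.ofReal (2 * (v ⬝ᵥ v) * Real.exp (c ^ 2 * R ^ 2 / 2)) := by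
  have hvv : 0 ≤ v ⬝ᵥ v := by simpa using dotProduct_star_self_nonneg v
  have hexp : HasSum (fun k => 2 * (v ⬝ᵥ v) * ((c ^ 2 * R ^ 2 / 2) ^ k / k !))
      (2 * (v ⬝ᵥ v) * Real.exp (c ^ 2 * R ^ 2 / 2)) := by
    have h : HasSum (fun k => (c ^ 2 * R ^ 2 / 2) ^ k / k !) (Real.exp (c ^ 2 * R ^ 2 / 2)) := by
      rw [Real.exp_eq_exp_ℝ]
      exact expSeries_div_hasSum_exp _
    exact h.mul_left _
  simp_rw [← (hasSum_dotProduct_exp_add_exp_neg_mulVec _ c v).tsum_eq, ← hexp.tsum_eq]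
  refine lintegral_ofReal_tsum_le (fun k ω => ?_)
    (fun ω => (hasSum_dotProduct_exp_add_exp_neg_mulVec (X ω) c v).summable)
    (fun k => (integrable_dotProduct_mulVec (hXint k) v).const_mul _) (fun k => ?_) hexp.summable
  · have hquad := ((hXsym ω).posSemidef_pow_two_mul k).dotProduct_mulVec_nonneg v
    rw [star_trivial] at hquad
    have hc : 0 ≤ c ^ (2 * k) := (even_two_mul k).pow_nonneg c
    positivity
  · rw [integral_const_mul]
    have hc : 0 ≤ c ^ (2 * k) := (even_two_mul k).pow_nonneg c
    calc _ ≤ 2 * (c ^ (2 * k) / (2 * k)!) * (k ! * R ^ (2 * k) * (v ⬝ᵥ v)) := by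
          gcongr; exact hmom k
      _ = 2 * (v ⬝ᵥ v) * (c ^ (2 * k) / (2 * k)! * (k ! * R ^ (2 * k))) := by ring
      _ ≤ _ := by gcongr; exact pow_two_mul_div_factorial_mul_le c R k

end Probability

theorem stmt_15_general {Ω : Type*} [MeasurableSpace Ω] (μ : Measure Ω) [IsProbabilityMeasure μ]
    (m : ℕ) (X : Ω → Matrix (Fin m) (Fin m) ℝ) (R : ℝ)
    (hXsym : ∀ ω, (X ω).IsHermitian)
    (hXmeas : ∀ a b : Fin m, Measurable fun ω => X ω a b)
    (hXint : ∀ q : ℕ, ∀ a b : Fin m, Integrable (fun ω => ((X ω) ^ q) a b) μ)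
    (hmom : ∀ q : ℕ, Even q → Matrix.PosSemidef
      ((((q / 2).factorial : ℝ) * R ^ q) • (1 : Matrix (Fin m) (Fin m) ℝ) -
        Matrix.of fun a b => ∫ ω, ((X ω) ^ q) a b ∂μ))
    (ε : Ω → ℝ) (hεmeas : Measurable ε)
    (hεval : ∀ᵐ ω ∂μ, ε ω = 1 ∨ ε ω = -1)
    (hεhalf : μ {ω | ε ω = 1} = 1 / 2)
    (hindep : ProbabilityTheory.IndepFun ε (fun ω (p : Fin m × Fin m) => X ω p.1 p.2) μ)
    (hexpint : ∀ θ : ℝ, ∀ a b : Fin m,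
      Integrable (fun ω => (matExp ((2 * ε ω * θ) • X ω)) a b) μ) :
    ∀ θ : ℝ, Matrix.PosSemidef
      (Real.exp (2 * θ ^ 2 * R ^ 2) • (1 : Matrix (Fin m) (Fin m) ℝ) -
        Matrix.of fun a b => ∫ ω, (matExp ((2 * ε ω * θ) • X ω)) a b ∂μ) := by
  intro θ
  have hint := hexpint θ
  simp_rw [matExp_eq_exp, show ∀ ω, 2 * ε ω * θ = ε ω * (2 * θ) from fun ω => by ring] at hint ⊢
  refine IsHermitian.posSemidef_smul_one_sub ?_ fun v => ?_
  · ext a b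
    simp only [conjTranspose_apply, of_apply, star_trivial]
    exact integral_congr_ae
      (.of_forall fun ω => ((hXsym ω).smul (IsSelfAdjoint.all _)).exp.apply a b)
  have hmom' : ∀ k : ℕ, ∫ ω, v ⬝ᵥ X ω ^ (2 * k) *ᵥ v ∂μ ≤ k ! * R ^ (2 * k) * (v ⬝ᵥ v) := by
    intro k
    have := (hmom (2 * k) (even_two_mul k)).dotProduct_mulVec_le v
    rwa [dotProduct_integral_mulVec (hXint _) v, Nat.mul_div_cancel_left k two_pos] at this
  rw [dotProduct_integral_mulVec hint v, integral_eq_lintegral_of_nonneg_ae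
    (.of_forall fun ω => (hXsym ω).dotProduct_exp_smul_mulVec_nonneg _ v)
    (integrable_dotProduct_mulVec hint v).aestronglyMeasurable]
  have hvv : 0 ≤ v ⬝ᵥ v := by simpa using dotProduct_star_self_nonneg v
  refine ENNReal.toReal_le_of_le_ofReal (by positivity) ?_
  calc _ = _ := lintegral_ofReal_dotProduct_exp_rademacher_smul_mulVec hXsym hXmeas hεmeas hεval
        hεhalf hindep (2 * θ) v
    _ ≤ 2⁻¹ * ENNReal.ofReal (2 * (v ⬝ᵥ v) * Real.exp ((2 * θ) ^ 2 * R ^ 2 / 2)) := by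
        gcongr
        exact lintegral_ofReal_dotProduct_exp_add_exp_neg_le hXsym (fun k => hXint (2 * k)) v
          hmom' _
    _ = ENNReal.ofReal (Real.exp (2 * θ ^ 2 * R ^ 2) * (v ⬝ᵥ v)) := by
        rw [← ENNReal.ofReal_ofNat 2, ← ENNReal.ofReal_inv_of_pos two_pos,
          ← ENNReal.ofReal_mul (by norm_num),
          show (2 * θ) ^ 2 * R ^ 2 / 2 = 2 * θ ^ 2 * R ^ 2 by ring]
        congr 1
        ring

/-- Lemma 8 (Symmetrized sub-Gaussian matrix MGF): if the random symmetric matrix `X`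
has mean zero and even moments `E[X^q] ⪯ (q/2)! R^q I`, and `ε` is an independent
Rademacher sign, then `E[exp(2εθX)] ⪯ exp(2θ²R²) I` for every `θ ∈ ℝ`. -/
theorem stmt_15 {Ω : Type*} [MeasurableSpace Ω] (μ : Measure Ω) [IsProbabilityMeasure μ]
    (m : ℕ) (X : Ω → Matrix (Fin m) (Fin m) ℝ) (R : ℝ) (hR : 0 ≤ R)
    (hXsym : ∀ ω, (X ω).IsHermitian)
    (hXmeas : ∀ a b : Fin m, Measurable fun ω => X ω a b)
    (hXint : ∀ q : ℕ, ∀ a b : Fin m, Integrable (fun ω => ((X ω) ^ q) a b) μ)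
    (hmean : ∀ a b : Fin m, ∫ ω, X ω a b ∂μ = 0)
    (hmom : ∀ q : ℕ, Even q → Matrix.PosSemidef
      ((((q / 2).factorial : ℝ) * R ^ q) • (1 : Matrix (Fin m) (Fin m) ℝ) -
        Matrix.of fun a b => ∫ ω, ((X ω) ^ q) a b ∂μ))
    (ε : Ω → ℝ) (hεmeas : Measurable ε)
    (hεval : ∀ᵐ ω ∂μ, ε ω = 1 ∨ ε ω = -1)
    (hεhalf : μ {ω | ε ω = 1} = 1 / 2)
    (hindep : ProbabilityTheory.IndepFun ε (fun ω (p : Fin m × Fin m) => X ω p.1 p.2) μ)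
    (hexpint : ∀ θ : ℝ, ∀ a b : Fin m,
      Integrable (fun ω => (matExp ((2 * ε ω * θ) • X ω)) a b) μ) :
    ∀ θ : ℝ, Matrix.PosSemidef
      (Real.exp (2 * θ ^ 2 * R ^ 2) • (1 : Matrix (Fin m) (Fin m) ℝ) -
        Matrix.of fun a b => ∫ ω, (matExp ((2 * ε ω * θ) • X ω)) a b ∂μ) :=
  stmt_15_general μ m X R hXsym hXmeas hXint hmom ε hεmeas hεval hεhalf hindep hexpint
end
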